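/- arXiv:1305.3456 — 6 statements merged into one kernel-verified Lean document; each statement's English description precedes it below -/
import Mathlib

section
/- Let W be a symmetric q×q real matrix, let α₁, α₂ : [0,∞) → [0,∞) be class K functions, and set ᾱ(r) := min(α₁(r), α₂(r)). Let S₁, S₂ : [0,∞) → [0,∞) be differentiable and let δy₁, δy₂, δv₁, δv₂ : [0,∞) → ℝ^q. Assume that for all t ≥ 0: S₁'(t) ≤ −α₁(S₁(t)) + δy₁(t)ᵀ W (−δy₂(t) + δv₁(t)) and S₂'(t) ≤ −α₂(S₂(t)) + δy₂(t)ᵀ W (δy₁(t) + δv₂(t)). Then for all t ≥ 0: (S₁ + S₂)'(t) ≤ −ᾱ((S₁(t) + S₂(t))/2) + δy₁(t)ᵀ W δv₁(t) + δy₂(t)ᵀ W δv₂(t). -/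
/-!
Adding the two dissipation inequalities, the internal supplies `δy₁ᵀ W (-δy₂)` and
`δy₂ᵀ W δy₁` cancel because `W` is symmetric. The rate `min α₁ α₂` at the mean of `S₁, S₂`
is dominated by `α₁ S₁ + α₂ S₂`, since the mean lies below the larger of the two storages.
-/

open Matrix

/-- A function `α : [0,∞) → [0,∞)` (modeled as a function `ℝ → ℝ` that is nonnegative
on `[0,∞)`) is of class `K` if it is locally Lipschitz on `[0,∞)`, strictly increasing
on `[0,∞)`, and `α 0 = 0`. -/
def IsClassK (α : ℝ → ℝ) : Prop :=
  LocallyLipschitzOn (Set.Ici 0) α ∧ StrictMonoOn α (Set.Ici 0) ∧ α 0 = 0 ∧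
    ∀ r : ℝ, 0 ≤ r → 0 ≤ α r

open Set

theorem IsClassK.monotoneOn {α : ℝ → ℝ} (hα : IsClassK α) : MonotoneOn α (Ici 0) :=
  hα.2.1.monotoneOn

theorem IsClassK.nonneg {α : ℝ → ℝ} (hα : IsClassK α) {r : ℝ} (hr : 0 ≤ r) : 0 ≤ α r :=
  hα.2.2.2 r hr

namespace Matrix.IsSymm

variable {n R : Type*} [Fintype n]

theorem dotProduct_mulVec_comm [CommSemiring R] {W : Matrix n n R} (hW : W.IsSymm)
    (a b : n → R) : a ⬝ᵥ W *ᵥ b = b ⬝ᵥ W *ᵥ a := by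
  rw [dotProduct_mulVec, ← mulVec_transpose, hW.eq, dotProduct_comm]

theorem feedback_supply_add [CommRing R] {W : Matrix n n R} (hW : W.IsSymm)
    (y₁ y₂ v₁ v₂ : n → R) :
    y₁ ⬝ᵥ W *ᵥ (-y₂ + v₁) + y₂ ⬝ᵥ W *ᵥ (y₁ + v₂) = y₁ ⬝ᵥ W *ᵥ v₁ + y₂ ⬝ᵥ W *ᵥ v₂ := by
  rw [mulVec_add, mulVec_add, dotProduct_add, dotProduct_add, mulVec_neg, dotProduct_neg,
    hW.dotProduct_mulVec_comm y₂ y₁]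
  ring

end Matrix.IsSymm

theorem min_apply_midpoint_le_add {α₁ α₂ : ℝ → ℝ}
    (hα₁ : MonotoneOn α₁ (Ici 0)) (hα₂ : MonotoneOn α₂ (Ici 0))
    (hα₁_nonneg : ∀ r, 0 ≤ r → 0 ≤ α₁ r) (hα₂_nonneg : ∀ r, 0 ≤ r → 0 ≤ α₂ r)
    {s₁ s₂ : ℝ} (hs₁ : 0 ≤ s₁) (hs₂ : 0 ≤ s₂) :
    min (α₁ ((s₁ + s₂) / 2)) (α₂ ((s₁ + s₂) / 2)) ≤ α₁ s₁ + α₂ s₂ := by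
  have hmid : (s₁ + s₂) / 2 ∈ Ici (0 : ℝ) := mem_Ici.mpr (by positivity)
  rcases le_total s₁ s₂ with h | h
  · have hα₂_mid : α₂ ((s₁ + s₂) / 2) ≤ α₂ s₂ := hα₂ hmid hs₂ (by linarith)
    linarith [min_le_right (α₁ ((s₁ + s₂) / 2)) (α₂ ((s₁ + s₂) / 2)), hα₁_nonneg s₁ hs₁]
  · have hα₁_mid : α₁ ((s₁ + s₂) / 2) ≤ α₁ s₁ := hα₁ hmid hs₁ (by linarith)
    linarith [min_le_left (α₁ ((s₁ + s₂) / 2)) (α₂ ((s₁ + s₂) / 2)), hα₂_nonneg s₂ hs₂]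

/-- Feedback interconnection of two strictly uniformly differentially passive systems
(through `u₁ = -y₂ + v₁`, `u₂ = y₁ + v₂`, with constant symmetric tensor `W`) is
strictly uniformly differentially passive with storage `S₁ + S₂` and
class-`K` lower rate `ᾱ(r) = min (α₁ r) (α₂ r)`. -/
theorem stmt_2 {q : ℕ} (W : Matrix (Fin q) (Fin q) ℝ) (hW : W.IsSymm)
    (α₁ α₂ : ℝ → ℝ) (hα₁ : IsClassK α₁) (hα₂ : IsClassK α₂)
    (S₁ S₂ : ℝ → ℝ)
    (hS₁nonneg : ∀ t : ℝ, 0 ≤ t → 0 ≤ S₁ t) (hS₂nonneg : ∀ t : ℝ, 0 ≤ t → 0 ≤ S₂ t)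
    (hS₁diff : ∀ t : ℝ, 0 ≤ t → DifferentiableWithinAt ℝ S₁ (Set.Ici 0) t)
    (hS₂diff : ∀ t : ℝ, 0 ≤ t → DifferentiableWithinAt ℝ S₂ (Set.Ici 0) t)
    (δy₁ δy₂ δv₁ δv₂ : ℝ → (Fin q → ℝ))
    (h₁ : ∀ t : ℝ, 0 ≤ t → derivWithin S₁ (Set.Ici 0) t ≤
      -α₁ (S₁ t) + δy₁ t ⬝ᵥ W.mulVec (-δy₂ t + δv₁ t))
    (h₂ : ∀ t : ℝ, 0 ≤ t → derivWithin S₂ (Set.Ici 0) t ≤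
      -α₂ (S₂ t) + δy₂ t ⬝ᵥ W.mulVec (δy₁ t + δv₂ t)) :
    ∀ t : ℝ, 0 ≤ t → derivWithin (fun τ => S₁ τ + S₂ τ) (Set.Ici 0) t ≤
      -(min (α₁ ((S₁ t + S₂ t) / 2)) (α₂ ((S₁ t + S₂ t) / 2)))
        + δy₁ t ⬝ᵥ W.mulVec (δv₁ t) + δy₂ t ⬝ᵥ W.mulVec (δv₂ t) := by
  intro t ht
  rw [derivWithin_fun_add (hS₁diff t ht) (hS₂diff t ht)]
  have hsupply := hW.feedback_supply_add (δy₁ t) (δy₂ t) (δv₁ t) (δv₂ t)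
  have hrate := min_apply_midpoint_le_add hα₁.monotoneOn hα₂.monotoneOn
    (fun _ => hα₁.nonneg) (fun _ => hα₂.nonneg) (hS₁nonneg t ht) (hS₂nonneg t ht)
  linarith [h₁ t ht, h₂ t ht]
end

section
/- Let f : ℝⁿ → ℝⁿ, g : ℝⁿ → ℝ^{n×q}, h : ℝⁿ → ℝ^q be continuously differentiable, let m : ℝⁿ → ℝ be three times continuously differentiable with Hessian M(x) := ∇²m(x) (a symmetric n×n matrix), let W : ℝⁿ → ℝ^{q×q}, and let Π ∈ ℝ^{n×q} be a constant matrix. Assume: (i) for all x, v ∈ ℝⁿ, vᵀ M(x) J_{Mf}(x) v ≤ 0, where J_{Mf}(x) is the Jacobian at x of the map z ↦ M(z) f(z); (ii) M(x) g(x) = Π for all x; (iii) J_h(x)ᵀ W(x) = M(x) Π for all x, where J_h is the Jacobian of h. Then for every continuously differentiable x, δx : ℝ → ℝⁿ and continuous u, δu : ℝ → ℝ^q satisfying, for all t, ẋ(t) = f(x(t)) + g(x(t)) u(t) and δẋ(t) = J_f(x(t)) δx(t) + J_{g·u(t)}(x(t)) δx(t) + g(x(t)) δu(t) — where J_{g·v}(x)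 denotes the Jacobian at x of the map z ↦ g(z) v — the function S(t) := (1/2) δx(t)ᵀ M(x(t))² δx(t) satisfies S'(t) ≤ δy(t)ᵀ W(x(t)) δu(t) for all t, where δy(t) := J_h(x(t)) δx(t). -/
open Matrix

attribute [local instance] Matrix.normedAddCommGroup Matrix.normedSpace

/-- The Jacobian matrix at `x` of a map `F : ℝⁿ → ℝᵐ`: entry `(i, j)` is the
derivative of the `i`-th component of `F` in the direction of the `j`-th basis vector. -/
noncomputable def jac {n m : ℕ} (F : (Fin n → ℝ) → (Fin m → ℝ)) (x : Fin n → ℝ) :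
    Matrix (Fin m) (Fin n) ℝ :=
  Matrix.of fun i j => fderiv ℝ F x (Pi.single j (1 : ℝ)) i

/-- The Hessian matrix of `m : ℝⁿ → ℝ` at `x`. -/
noncomputable def hess {n : ℕ} (m : (Fin n → ℝ) → ℝ) (x : Fin n → ℝ) :
    Matrix (Fin n) (Fin n) ℝ :=
  Matrix.of fun i j => fderiv ℝ (fun z => fderiv ℝ m z (Pi.single j (1 : ℝ))) x
    (Pi.single i (1 : ℝ))

/-!
Since `M = ∇²m` is symmetric, `S = ½ ‖M(x) δx‖²`. Along the trajectory, `p = M(x) δx` has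
`ṗ = (∂_ẋ M) δx + M δẋ`, and the symmetry of the third derivative of `m` turns `(∂_ẋ M) δx`
into `(∂_δx M) ẋ`. Differentiating `M f` and the constant `M g u = Π u` in the direction `δx`
then gives `ṗ = J_{Mf}(x) δx + Π δu`. Hence `Ṡ = ⟨M δx, J_{Mf} δx⟩ + δxᵀ M Π δu`, where the first
term is `≤ 0` by (i) and the second equals `δyᵀ W δu` by (iii).
-/

lemma jac_mulVec {n k : ℕ} (F : (Fin n → ℝ) → (Fin k → ℝ)) (x v : Fin n → ℝ) :
    jac F x *ᵥ v = fderiv ℝ F x v := by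
  conv_rhs => rw [pi_eq_sum_univ' v]
  ext i
  simp [jac, Matrix.mulVec, dotProduct, mul_comm]

lemma dotProduct_mulVec_of_transpose_eq {ι α : Type*} [Fintype ι] [CommSemiring α]
    {A : Matrix ι ι α} (hA : Aᵀ = A) (v w : ι → α) : (A *ᵥ v) ⬝ᵥ w = v ⬝ᵥ A *ᵥ w := by
  rw [dotProduct_comm, ← dotProduct_transpose_mulVec, hA]

lemma DifferentiableAt.matrix_mulVec_const {E ι κ : Type*} [NormedAddCommGroup E]
    [NormedSpace ℝ E] [Fintype ι] [Fintype κ] {A : E → Matrix ι κ ℝ} {X : E}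
    (hA : DifferentiableAt ℝ A X) (c : κ → ℝ) : DifferentiableAt ℝ (fun z => A z *ᵥ c) X :=
  differentiableAt_pi.2 fun i => DifferentiableAt.fun_sum (u := Finset.univ) fun j _ =>
    (differentiableAt_pi.1 (differentiableAt_pi.1 hA i) j).mul_const (c j)

lemma HasDerivAt.dotProduct {ι : Type*} [Fintype ι] {p q : ℝ → ι → ℝ} {p' q' : ι → ℝ} {t : ℝ}
    (hp : HasDerivAt p p' t) (hq : HasDerivAt q q' t) :
    HasDerivAt (fun s => p s ⬝ᵥ q s) (p' ⬝ᵥ q t + p t ⬝ᵥ q') t := by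
  refine (HasDerivAt.fun_sum fun i _ =>
    (hasDerivAt_pi.1 hp i).mul (hasDerivAt_pi.1 hq i)).congr_deriv ?_
  exact Finset.sum_add_distrib

noncomputable def covectorCoords {n : ℕ} : ((Fin n → ℝ) →L[ℝ] ℝ) →L[ℝ] (Fin n → ℝ) :=
  ContinuousLinearMap.pi fun i => ContinuousLinearMap.apply ℝ ℝ (Pi.single i 1)

section Hessian

variable {n : ℕ} {m : (Fin n → ℝ) → ℝ}

lemma hess_apply (hm : ContDiff ℝ 2 m) (z : Fin n → ℝ) (i j : Fin n) :
    hess m z i j = fderiv ℝ (fderiv ℝ m) z (Pi.single i 1) (Pi.single j 1) := by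
  have hdiff : DifferentiableAt ℝ (fderiv ℝ m) z :=
    (hm.fderiv_right (m := 1) le_rfl).differentiable one_ne_zero z
  simp [hess, fderiv_clm_apply hdiff (differentiableAt_const _)]

lemma hess_transpose (hm : ContDiff ℝ 2 m) (z : Fin n → ℝ) : (hess m z)ᵀ = hess m z := by
  ext i j
  rw [transpose_apply, hess_apply hm, hess_apply hm]
  exact (hm.contDiffAt.isSymmSndFDerivAt (by simp)).eq _ _

lemma hess_mulVec (hm : ContDiff ℝ 2 m) (z b : Fin n → ℝ) :
    hess m z *ᵥ b = covectorCoords (fderiv ℝ (fderiv ℝ m) z b) := by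
  ext i
  have hsymm := hm.contDiffAt.isSymmSndFDerivAt (x := z) (by simp)
  simp only [covectorCoords, ContinuousLinearMap.pi_apply, ContinuousLinearMap.apply_apply]
  rw [hsymm.eq]
  conv_rhs => rw [pi_eq_sum_univ' b]
  simp [Matrix.mulVec, dotProduct, hess_apply hm, mul_comm]

lemma hasFDerivAt_fderiv_fderiv (hm : ContDiff ℝ 3 m) (X : Fin n → ℝ) :
    HasFDerivAt (fderiv ℝ (fderiv ℝ m)) (fderiv ℝ (fderiv ℝ (fderiv ℝ m)) X) X := by
  have h2 : ContDiff ℝ 1 (fderiv ℝ (fderiv ℝ m)) :=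
    (hm.fderiv_right (m := 2) (by norm_num)).fderiv_right le_rfl
  exact (h2.differentiable one_ne_zero X).hasFDerivAt

lemma hasFDerivAt_hess_mulVec (hm : ContDiff ℝ 3 m) (X b : Fin n → ℝ) :
    HasFDerivAt (fun z => hess m z *ᵥ b)
      (covectorCoords ∘L (fderiv ℝ (fderiv ℝ (fderiv ℝ m)) X).flip b) X := by
  simp_rw [hess_mulVec (hm.of_le (by norm_num))]
  simpa using covectorCoords.hasFDerivAt.comp X
    ((hasFDerivAt_fderiv_fderiv hm X).clm_apply (hasFDerivAt_const b X))

lemma fderiv_hess_mulVec_comm (hm : ContDiff ℝ 3 m) (X a b : Fin n → ℝ) :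
    fderiv ℝ (fun z => hess m z *ᵥ b) X a = fderiv ℝ (fun z => hess m z *ᵥ a) X b := by
  have hsymm : IsSymmSndFDerivAt ℝ (fderiv ℝ m) X :=
    (hm.fderiv_right (m := 2) (by norm_num)).contDiffAt.isSymmSndFDerivAt (by simp)
  simp [(hasFDerivAt_hess_mulVec hm X _).fderiv, hsymm.eq a b]

lemma fderiv_hess_mulVec_add (hm : ContDiff ℝ 3 m) (X a b c : Fin n → ℝ) :
    fderiv ℝ (fun z => hess m z *ᵥ (b + c)) X a
      = fderiv ℝ (fun z => hess m z *ᵥ b) X a + fderiv ℝ (fun z => hess m z *ᵥ c) X a := by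
  simp [(hasFDerivAt_hess_mulVec hm X _).fderiv]

lemma hasDerivAt_hess_mulVec (hm : ContDiff ℝ 3 m) {x δx : ℝ → Fin n → ℝ} {w δw : Fin n → ℝ}
    {t : ℝ} (hx : HasDerivAt x w t) (hδx : HasDerivAt δx δw t) :
    HasDerivAt (fun s => hess m (x s) *ᵥ δx s)
      (fderiv ℝ (fun z => hess m z *ᵥ δx t) (x t) w + hess m (x t) *ᵥ δw) t := by
  rw [(hasFDerivAt_hess_mulVec hm _ _).fderiv]
  simp_rw [hess_mulVec (hm.of_le (by norm_num))]
  have hD2 : HasDerivAt (fderiv ℝ (fderiv ℝ m) ∘ x)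
      (fderiv ℝ (fderiv ℝ (fderiv ℝ m)) (x t) w) t :=
    (hasFDerivAt_fderiv_fderiv hm (x t)).comp_hasDerivAt (l := fderiv ℝ (fderiv ℝ m)) t hx
  exact (covectorCoords.hasFDerivAt.comp_hasDerivAt t (hD2.clm_apply hδx)).congr_deriv
    (by simp)

lemma fderiv_hess_mulVec_leibniz (hm : ContDiff ℝ 3 m) {F : (Fin n → ℝ) → Fin n → ℝ}
    {X : Fin n → ℝ} (hF : DifferentiableAt ℝ F X) (a : Fin n → ℝ) :
    fderiv ℝ (fun z => hess m z *ᵥ F z) X a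
      = fderiv ℝ (fun z => hess m z *ᵥ F X) X a + hess m X *ᵥ fderiv ℝ F X a := by
  have hm2 : ContDiff ℝ 2 m := hm.of_le (by norm_num)
  have hprod : HasFDerivAt (fun z => hess m z *ᵥ F z) (covectorCoords ∘L
      ((fderiv ℝ (fderiv ℝ m) X).comp (fderiv ℝ F X)
        + (fderiv ℝ (fderiv ℝ (fderiv ℝ m)) X).flip (F X))) X := by
    simp_rw [hess_mulVec hm2]
    exact covectorCoords.hasFDerivAt.comp X
      ((hasFDerivAt_fderiv_fderiv hm X).clm_apply hF.hasFDerivAt)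
  rw [hprod.fderiv, (hasFDerivAt_hess_mulVec hm X _).fderiv, hess_mulVec hm2]
  simp [add_comm]

end Hessian

section Displacement

variable {n q : ℕ} {m : (Fin n → ℝ) → ℝ} {f : (Fin n → ℝ) → Fin n → ℝ}
  {g : (Fin n → ℝ) → Matrix (Fin n) (Fin q) ℝ} {PI : Matrix (Fin n) (Fin q) ℝ}

lemma jac_hess_mulVec_eq (hm : ContDiff ℝ 3 m) {X : Fin n → ℝ} {u : Fin q → ℝ}
    (hf : DifferentiableAt ℝ f X) (hgu : DifferentiableAt ℝ (fun z => g z *ᵥ u) X)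
    (hMg : ∀ z, hess m z * g z = PI) (v : Fin n → ℝ) :
    fderiv ℝ (fun z => hess m z *ᵥ v) X (f X + g X *ᵥ u)
        + hess m X *ᵥ (jac f X *ᵥ v + jac (fun z => g z *ᵥ u) X *ᵥ v)
      = jac (fun z => hess m z *ᵥ f z) X *ᵥ v := by
  -- `M (g u) = Π u` is constant, so its derivative cancels the `g u` part of the drift.
  have hconst : fderiv ℝ (fun z => hess m z *ᵥ (g z *ᵥ u)) X v = 0 := by
    simp [mulVec_mulVec, hMg]
  rw [fderiv_hess_mulVec_leibniz hm hgu] at hconst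
  rw [jac_mulVec, jac_mulVec, jac_mulVec, fderiv_hess_mulVec_leibniz hm hf,
    fderiv_hess_mulVec_comm hm, fderiv_hess_mulVec_add hm, mulVec_add]
  calc _ = fderiv ℝ (fun z => hess m z *ᵥ f X) X v + hess m X *ᵥ fderiv ℝ f X v
        + (fderiv ℝ (fun z => hess m z *ᵥ (g X *ᵥ u)) X v
          + hess m X *ᵥ fderiv ℝ (fun z => g z *ᵥ u) X v) := by abel
    _ = _ := by rw [hconst, add_zero]

lemma hasDerivAt_hess_mulVec_displacement (hm : ContDiff ℝ 3 m) {x δx : ℝ → Fin n → ℝ}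
    {u δu : Fin q → ℝ} {t : ℝ} (hf : DifferentiableAt ℝ f (x t))
    (hgu : DifferentiableAt ℝ (fun z => g z *ᵥ u) (x t)) (hMg : ∀ z, hess m z * g z = PI)
    (hx : HasDerivAt x (f (x t) + g (x t) *ᵥ u) t)
    (hδx : HasDerivAt δx (jac f (x t) *ᵥ δx t + jac (fun z => g z *ᵥ u) (x t) *ᵥ δx t
      + g (x t) *ᵥ δu) t) :
    HasDerivAt (fun s => hess m (x s) *ᵥ δx s)
      (jac (fun z => hess m z *ᵥ f z) (x t) *ᵥ δx t + PI *ᵥ δu) t := by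
  refine (hasDerivAt_hess_mulVec hm hx hδx).congr_deriv ?_
  rw [← jac_hess_mulVec_eq hm hf hgu hMg, mulVec_add, mulVec_mulVec, hMg, add_assoc]

end Displacement

theorem stmt_4_general {n q : ℕ}
    (f : (Fin n → ℝ) → (Fin n → ℝ)) (g : (Fin n → ℝ) → Matrix (Fin n) (Fin q) ℝ)
    (h : (Fin n → ℝ) → (Fin q → ℝ)) (m : (Fin n → ℝ) → ℝ)
    (W : (Fin n → ℝ) → Matrix (Fin q) (Fin q) ℝ) (PI : Matrix (Fin n) (Fin q) ℝ)
    (hf : ContDiff ℝ 1 f) (hg : ContDiff ℝ 1 g)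
    (hm : ContDiff ℝ 3 m)
    (M : (Fin n → ℝ) → Matrix (Fin n) (Fin n) ℝ) (hM : ∀ x, M x = hess m x)
    (cond1 : ∀ (x v : Fin n → ℝ),
      v ⬝ᵥ (M x).mulVec ((jac (fun z => (M z).mulVec (f z)) x).mulVec v) ≤ 0)
    (cond2 : ∀ x, M x * g x = PI)
    (cond3 : ∀ x, (jac h x)ᵀ * W x = M x * PI)
    (x δx : ℝ → (Fin n → ℝ)) (u δu : ℝ → (Fin q → ℝ))
    (hx : ∀ t : ℝ, HasDerivAt x (f (x t) + (g (x t)).mulVec (u t)) t)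
    (hδx : ∀ t : ℝ, HasDerivAt δx
      ((jac f (x t)).mulVec (δx t) + (jac (fun z => (g z).mulVec (u t)) (x t)).mulVec (δx t)
        + (g (x t)).mulVec (δu t)) t)
    (S : ℝ → ℝ)
    (hS : ∀ t : ℝ, S t = (1 / 2) * (δx t ⬝ᵥ (M (x t) * M (x t)).mulVec (δx t)))
    (δy : ℝ → (Fin q → ℝ)) (hδy : ∀ t : ℝ, δy t = (jac h (x t)).mulVec (δx t)) :
    ∀ t : ℝ, deriv S t ≤ δy t ⬝ᵥ (W (x t)).mulVec (δu t) := by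
  obtain rfl : M = hess m := funext hM
  have hsymm := hess_transpose (hm.of_le (by norm_num))
  have hS_eq : S = fun s => (hess m (x s) *ᵥ δx s) ⬝ᵥ (hess m (x s) *ᵥ δx s) / 2 := by
    ext s
    rw [hS, dotProduct_mulVec_of_transpose_eq (hsymm _), mulVec_mulVec]
    ring
  intro t
  have hp := hasDerivAt_hess_mulVec_displacement hm (hf.differentiable one_ne_zero _)
    ((hg.differentiable one_ne_zero _).matrix_mulVec_const (u t)) cond2 (hx t) (hδx t)
  calc deriv S t
      = (hess m (x t) *ᵥ δx t) ⬝ᵥ (jac (fun z => hess m z *ᵥ f z) (x t) *ᵥ δx t)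
        + (hess m (x t) *ᵥ δx t) ⬝ᵥ (PI *ᵥ δu t) := by
        rw [hS_eq, ((hp.dotProduct hp).div_const 2).deriv, dotProduct_comm _ (hess m _ *ᵥ _),
          add_self_div_two, dotProduct_add]
    _ = δx t ⬝ᵥ hess m (x t) *ᵥ (jac (fun z => hess m z *ᵥ f z) (x t) *ᵥ δx t)
        + δy t ⬝ᵥ W (x t) *ᵥ δu t := by
        rw [dotProduct_mulVec_of_transpose_eq (hsymm _),
          dotProduct_mulVec_of_transpose_eq (hsymm _)]
        congr 1
        rw [mulVec_mulVec, ← cond3, ← mulVec_mulVec, dotProduct_transpose_mulVec, dotProduct_comm,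
          hδy]
    _ ≤ δy t ⬝ᵥ W (x t) *ᵥ δu t := by linarith [cond1 (x t) (δx t)]

/-- Differential passivity of the input-affine system `ẋ = f(x) + g(x)u`, `y = h(x)`
with differential storage `S = ½ δxᵀ M(x)ᵀ M(x) δx`, `M(x) = ∇²m(x)`, under the
conditions `M M f`-contraction, `M g = Π`, `J_hᵀ W = M Π`. -/
theorem stmt_4 {n q : ℕ}
    (f : (Fin n → ℝ) → (Fin n → ℝ)) (g : (Fin n → ℝ) → Matrix (Fin n) (Fin q) ℝ)
    (h : (Fin n → ℝ) → (Fin q → ℝ)) (m : (Fin n → ℝ) → ℝ)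
    (W : (Fin n → ℝ) → Matrix (Fin q) (Fin q) ℝ) (PI : Matrix (Fin n) (Fin q) ℝ)
    (hf : ContDiff ℝ 1 f) (hg : ContDiff ℝ 1 g) (hh : ContDiff ℝ 1 h)
    (hm : ContDiff ℝ 3 m)
    (M : (Fin n → ℝ) → Matrix (Fin n) (Fin n) ℝ) (hM : ∀ x, M x = hess m x)
    (cond1 : ∀ (x v : Fin n → ℝ),
      v ⬝ᵥ (M x).mulVec ((jac (fun z => (M z).mulVec (f z)) x).mulVec v) ≤ 0)
    (cond2 : ∀ x, M x * g x = PI)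
    (cond3 : ∀ x, (jac h x)ᵀ * W x = M x * PI)
    (x δx : ℝ → (Fin n → ℝ)) (u δu : ℝ → (Fin q → ℝ))
    (hu : Continuous u) (hδu : Continuous δu)
    (hx : ∀ t : ℝ, HasDerivAt x (f (x t) + (g (x t)).mulVec (u t)) t)
    (hδx : ∀ t : ℝ, HasDerivAt δx
      ((jac f (x t)).mulVec (δx t) + (jac (fun z => (g z).mulVec (u t)) (x t)).mulVec (δx t)
        + (g (x t)).mulVec (δu t)) t)
    (S : ℝ → ℝ)
    (hS : ∀ t : ℝ, S t = (1 / 2) * (δx t ⬝ᵥ (M (x t) * M (x t)).mulVec (δx t)))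
    (δy : ℝ → (Fin q → ℝ)) (hδy : ∀ t : ℝ, δy t = (jac h (x t)).mulVec (δx t)) :
    ∀ t : ℝ, deriv S t ≤ δy t ⬝ᵥ (W (x t)).mulVec (δu t) :=
  stmt_4_general f g h m W PI hf hg hm M hM cond1 cond2 cond3 x δx u δu hx hδx S hS δy hδy
end

section
/- Let μ : ℝ → ℝ be continuously differentiable with μ'(r) > 0 for all r, and let R > 0. Let q, δq : ℝ → ℝ be differentiable and let i_c, i_r, V, I, δi_c, δi_r, δV, δI : ℝ → ℝ satisfy, for all t: q'(t) = i_c(t), V(t) = μ(q(t)), μ(q(t)) = R i_r(t), I(t) = i_c(t) + i_r(t), and δq'(t) = δi_c(t), δV(t) = μ'(q(t)) δq(t), δV(t) = R δi_r(t), δI(t) = δi_c(t) + δi_r(t). Then for all t, the function S(t) := (1/2) δq(t)² satisfies S'(t) ≤ (1/μ'(q(t))) δV(t) δI(t). -/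
/-!
Along a trajectory, `d/dt (½ δq²) = δq δi_c`. Dividing the supply rate by `μ'(q) > 0` turns
`δV δI` into `δq (δi_c + δi_r)`, so the supply exceeds the storage rate by `δq δi_r`, the
power dissipated in the linearized resistor, which is `μ'(q) δq² / R ≥ 0`.
-/

namespace NonlinearRC

theorem hasDerivAt_half_sq {f : ℝ → ℝ} {f' t : ℝ} (hf : HasDerivAt f f' t) :
    HasDerivAt (fun s => 1 / 2 * f s ^ 2) (f t * f') t := by
  refine ((hf.fun_pow 2).const_mul (1 / 2)).congr_deriv ?_
  norm_num
  ring

theorem resistor_dissipation_nonneg {w R x i : ℝ} (hw : 0 < w) (hR : 0 < R)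
    (h : w * x = R * i) : 0 ≤ x * i := by
  refine nonneg_of_mul_nonneg_right ?_ hR
  rw [show R * (x * i) = w * x ^ 2 by linear_combination x * h.symm]
  positivity

end NonlinearRC

open NonlinearRC in
theorem stmt_6_general (μ : ℝ → ℝ) (hμ' : ∀ r : ℝ, 0 < deriv μ r)
    (R : ℝ) (hR : 0 < R)
    (q δq δi_c δi_r δV δI : ℝ → ℝ)
    (hδq : ∀ t : ℝ, HasDerivAt δq (δi_c t) t)
    (hδV : ∀ t : ℝ, δV t = deriv μ (q t) * δq t)
    (hδvr : ∀ t : ℝ, δV t = R * δi_r t)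
    (hδI : ∀ t : ℝ, δI t = δi_c t + δi_r t)
    (S : ℝ → ℝ) (hS : ∀ t : ℝ, S t = (1 / 2) * (δq t) ^ 2) :
    ∀ t : ℝ, deriv S t ≤ (1 / deriv μ (q t)) * (δV t * δI t) := by
  intro t
  have hS' : HasDerivAt S (δq t * δi_c t) t := by
    rw [funext hS]
    exact hasDerivAt_half_sq (hδq t)
  have hdiss : 0 ≤ δq t * δi_r t :=
    resistor_dissipation_nonneg (hμ' (q t)) hR ((hδV t).symm.trans (hδvr t))
  have hsupply : 1 / deriv μ (q t) * (δV t * δI t) = δq t * δi_c t + δq t * δi_r t := by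
    rw [hδV, hδI]
    field_simp [(hμ' (q t)).ne']
  rw [hS'.deriv, hsupply]
  linarith

/-- Differential passivity of the nonlinear RC circuit from the external voltage `V`
to the external current `I`, with differential storage `S = ½ δq²` and
state-dependent supply rate `(1/μ'(q)) δV δI`. -/
theorem stmt_6 (μ : ℝ → ℝ) (hμ : ContDiff ℝ 1 μ) (hμ' : ∀ r : ℝ, 0 < deriv μ r)
    (R : ℝ) (hR : 0 < R)
    (q δq i_c i_r V I δi_c δi_r δV δI : ℝ → ℝ)
    (hq : ∀ t : ℝ, HasDerivAt q (i_c t) t)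
    (hV : ∀ t : ℝ, V t = μ (q t))
    (hvr : ∀ t : ℝ, μ (q t) = R * i_r t)
    (hI : ∀ t : ℝ, I t = i_c t + i_r t)
    (hδq : ∀ t : ℝ, HasDerivAt δq (δi_c t) t)
    (hδV : ∀ t : ℝ, δV t = deriv μ (q t) * δq t)
    (hδvr : ∀ t : ℝ, δV t = R * δi_r t)
    (hδI : ∀ t : ℝ, δI t = δi_c t + δi_r t)
    (S : ℝ → ℝ) (hS : ∀ t : ℝ, S t = (1 / 2) * (δq t) ^ 2) :
    ∀ t : ℝ, deriv S t ≤ (1 / deriv μ (q t)) * (δV t * δI t) :=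
  stmt_6_general μ hμ' R hR q δq δi_c δi_r δV δI hδq hδV hδvr hδI S hS
end

section
/- Let R_r > 0 and R_s > 0 be real constants, let ω_g, ω_s : ℝ → ℝ, and let δφ_r, δφ_s, δi_r, δi_s, δu_s : ℝ → ℂ with δφ_r, δφ_s differentiable. Assume that for all t: δφ_r'(t) = −i ω_g(t) δφ_r(t) − R_r δi_r(t) and δφ_s'(t) = −i ω_s(t) δφ_s(t) − R_s δi_s(t) + δu_s(t). Then the function V(t) := |δφ_r(t)|²/(2 R_r) + |δφ_s(t)|²/(2 R_s) is differentiable and satisfies, for all t: V'(t) = −Re(conj(δφ_r(t)) δi_r(t)) − Re(conj(δφ_s(t)) δi_s(t)) + (1/R_s) Re(conj(δφ_s(t)) δu_s(t)). -/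
open Complex

lemma re_conj_mul_I_mul_ofReal_mul_self (z : ℂ) (ω : ℝ) :
    ((starRingEnd ℂ) z * (I * ω * z)).re = 0 := by
  simp only [mul_re, mul_im, conj_re, conj_im, I_re, I_im, ofReal_re, ofReal_im]
  ring

/-- The rotation term `-iωf` is orthogonal to `f`, so it drops out of the derivative of `‖f‖²`. -/
lemma HasDerivAt.norm_sq_div_of_rotating {f : ℝ → ℂ} {ω : ℝ} {g : ℂ} {t : ℝ} (R : ℝ)
    (hf : HasDerivAt f (-(I * ω) * f t + g) t) :
    HasDerivAt (fun s => ‖f s‖ ^ 2 / (2 * R)) (((starRingEnd ℂ) (f t) * g).re / R) t := by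
  refine (hf.norm_sq.div_const (2 * R)).congr_deriv ?_
  rw [Complex.inner, mul_comm _ ((starRingEnd ℂ) (f t)), mul_add, add_re, neg_mul, mul_neg,
    neg_re, re_conj_mul_I_mul_ofReal_mul_self]
  field_simp
  ring

/-- Uniform differential passivity of the displacement flux dynamics of the induction
motor: along solutions of the displacement rotor/stator flux equations, the storage
`V = |δφ_r|²/(2R_r) + |δφ_s|²/(2R_s)` satisfies the stated energy balance. -/
theorem stmt_7 (R_r R_s : ℝ) (hR_r : 0 < R_r) (hR_s : 0 < R_s)
    (ω_g ω_s : ℝ → ℝ) (δφ_r δφ_s δi_r δi_s δu_s : ℝ → ℂ)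
    (hr : ∀ t : ℝ, HasDerivAt δφ_r
      (-(Complex.I * (ω_g t : ℂ)) * δφ_r t - (R_r : ℂ) * δi_r t) t)
    (hs : ∀ t : ℝ, HasDerivAt δφ_s
      (-(Complex.I * (ω_s t : ℂ)) * δφ_s t - (R_s : ℂ) * δi_s t + δu_s t) t)
    (V : ℝ → ℝ)
    (hV : ∀ t : ℝ, V t = ‖δφ_r t‖ ^ 2 / (2 * R_r) + ‖δφ_s t‖ ^ 2 / (2 * R_s)) :
    ∀ t : ℝ, HasDerivAt V
      (-((starRingEnd ℂ) (δφ_r t) * δi_r t).re - ((starRingEnd ℂ) (δφ_s t) * δi_s t).re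
        + (1 / R_s) * ((starRingEnd ℂ) (δφ_s t) * δu_s t).re) t := by
  intro t
  have rotor := HasDerivAt.norm_sq_div_of_rotating R_r
    (by simpa only [sub_eq_add_neg] using hr t)
  have stator := HasDerivAt.norm_sq_div_of_rotating R_s
    (by simpa only [sub_eq_add_neg, add_assoc] using hs t)
  rw [show V = _ from funext hV]
  refine (rotor.add stator).congr_deriv ?_
  simp only [mul_add, mul_neg, mul_left_comm ((starRingEnd ℂ) _) ((_ : ℝ) : ℂ), add_re, neg_re,
    re_ofReal_mul]
  field_simp
  ring
end

section
/- Let L_r, L_s, L_l > 0 be real constants, and let A_r, A_s : ℝ² → ℝ² be positive semidefinite linear maps (i.e., ⟨A_r v, v⟩ ≥ 0 and ⟨A_s v, v⟩ ≥ 0 for all v ∈ ℝ²). For δφ_r, δφ_s ∈ ℝ², define δi_r := A_r δφ_r + (1/L_r + 1/L_l) δφ_r − (1/L_l) δφ_s and δi_s := A_s δφ_s + (1/L_s + 1/L_l) δφ_s − (1/L_l) δφ_r. Then ⟨δi_r, δφ_r⟩ + ⟨δi_s, δφ_s⟩ ≥ (1/L_r) |δφ_r|² + (1/L_s) |δφ_s|²;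 in particular the left-hand side is strictly positive whenever (δφ_r, δφ_s) ≠ (0, 0). -/
open scoped RealInnerProductSpace

/-! The coupling through the leakage inductance contributes exactly `(1/L_l) ‖δφ_r - δφ_s‖² ≥ 0`
to the supplied energy, and the saturation terms contribute `⟪A v, v⟫ ≥ 0`; what remains is
`(1/L_r) ‖δφ_r‖² + (1/L_s) ‖δφ_s‖²`. -/

section CoupledPair

variable {E : Type*} [NormedAddCommGroup E] [InnerProductSpace ℝ E]

theorem inner_coupled_add_inner_coupled (a b k : ℝ) (x y : E) :
    ⟪(a + k) • x - k • y, x⟫ + ⟪(b + k) • y - k • x, y⟫ =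
      a * ‖x‖ ^ 2 + b * ‖y‖ ^ 2 + k * ‖x - y‖ ^ 2 := by
  simp only [norm_sub_sq_real, inner_sub_left, real_inner_smul_left, real_inner_self_eq_norm_sq]
  rw [real_inner_comm x y]
  ring

theorem le_inner_coupled_add_inner_coupled {A B : E →ₗ[ℝ] E}
    (hA : ∀ v, 0 ≤ ⟪A v, v⟫) (hB : ∀ v, 0 ≤ ⟪B v, v⟫) (a b : ℝ) {k : ℝ} (hk : 0 ≤ k)
    (x y : E) :
    a * ‖x‖ ^ 2 + b * ‖y‖ ^ 2 ≤
      ⟪A x + (a + k) • x - k • y, x⟫ + ⟪B y + (b + k) • y - k • x, y⟫ := by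
  have hsplit : ⟪A x + (a + k) • x - k • y, x⟫ + ⟪B y + (b + k) • y - k • x, y⟫ =
      ⟪A x, x⟫ + ⟪B y, y⟫ + (⟪(a + k) • x - k • y, x⟫ + ⟪(b + k) • y - k • x, y⟫) := by
    simp only [add_sub_assoc, inner_add_left]
    ring
  rw [hsplit, inner_coupled_add_inner_coupled]
  linarith [hA x, hB y, mul_nonneg hk (sq_nonneg ‖x - y‖)]

end CoupledPair

theorem weighted_norm_sq_add_pos {E : Type*} [NormedAddCommGroup E] {a b : ℝ} (ha : 0 < a)
    (hb : 0 < b) {x y : E} (hxy : (x, y) ≠ (0, 0)) : 0 < a * ‖x‖ ^ 2 + b * ‖y‖ ^ 2 := by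
  rcases not_and_or.mp (Prod.mk_inj.not.mp hxy) with hx | hy
  · have := mul_pos ha (pow_pos (norm_pos_iff.mpr hx) 2)
    positivity
  · have := mul_pos hb (pow_pos (norm_pos_iff.mpr hy) 2)
    positivity

/-- The displacement flux–current relations of the saturated induction motor define a
(strictly) passive algebraic map: `⟨δi_r, δφ_r⟩ + ⟨δi_s, δφ_s⟩ ≥ (1/L_r)|δφ_r|² +
(1/L_s)|δφ_s|²`, and in particular the left-hand side is strictly positive whenever
`(δφ_r, δφ_s) ≠ (0, 0)`. -/
theorem stmt_8 (L_r L_s L_l : ℝ) (hL_r : 0 < L_r) (hL_s : 0 < L_s) (hL_l : 0 < L_l)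
    (A_r A_s : EuclideanSpace ℝ (Fin 2) →ₗ[ℝ] EuclideanSpace ℝ (Fin 2))
    (hA_r : ∀ v : EuclideanSpace ℝ (Fin 2), 0 ≤ ⟪A_r v, v⟫)
    (hA_s : ∀ v : EuclideanSpace ℝ (Fin 2), 0 ≤ ⟪A_s v, v⟫) :
    ∀ (δφ_r δφ_s δi_r δi_s : EuclideanSpace ℝ (Fin 2)),
      δi_r = A_r δφ_r + (1 / L_r + 1 / L_l) • δφ_r - (1 / L_l) • δφ_s →
      δi_s = A_s δφ_s + (1 / L_s + 1 / L_l) • δφ_s - (1 / L_l) • δφ_r →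
      ((1 / L_r) * ‖δφ_r‖ ^ 2 + (1 / L_s) * ‖δφ_s‖ ^ 2 ≤ ⟪δi_r, δφ_r⟫ + ⟪δi_s, δφ_s⟫) ∧
        ((δφ_r, δφ_s) ≠ (0, 0) → 0 < ⟪δi_r, δφ_r⟫ + ⟪δi_s, δφ_s⟫) := by
  intro φ_r φ_s i_r i_s rfl rfl
  have hbound := le_inner_coupled_add_inner_coupled hA_r hA_s (1 / L_r) (1 / L_s)
    (one_div_pos.mpr hL_l).le φ_r φ_s
  exact ⟨hbound, fun hφ =>
    (weighted_norm_sq_add_pos (one_div_pos.mpr hL_r) (one_div_pos.mpr hL_s) hφ).trans_le hbound⟩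
end

section
/- Let p ≥ 1 and 0 < c₁ ≤ c₂ be real constants. Let x : [0,∞) × [0,1] → ℝⁿ be such that for each t the map s ↦ x(t,s) is continuously differentiable with derivative ∂_s x(t,s), and let S : [0,∞) × [0,1] → [0,∞) satisfy: (i) c₁ |∂_s x(t,s)|^p ≤ S(t,s) ≤ c₂ |∂_s x(t,s)|^p for all (t,s); (ii) for each s, the map t ↦ S(t,s) is nonincreasing. Then for all t ≥ 0: |x(t,1) − x(t,0)| ≤ ∫₀¹ |∂_s x(t,s)| ds ≤ (c₂/c₁)^{1/p} ∫₀¹ |∂_s x(0,s)| ds. -/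
/-! The length `∫₀¹ ‖∂ₛx(t,s)‖ ds` of the connecting curve dominates the distance of its endpoints
by the fundamental theorem of calculus. Pointwise in `s`, the sandwich `c₁‖∂ₛx‖ᵖ ≤ S ≤ c₂‖∂ₛx‖ᵖ`
and the monotonicity of `S` in `t` give `c₁‖∂ₛx(t,s)‖ᵖ ≤ c₂‖∂ₛx(0,s)‖ᵖ`, i.e.
`‖∂ₛx(t,s)‖ ≤ (c₂/c₁)^{1/p} ‖∂ₛx(0,s)‖`; integrating over `s` bounds the length at time `t`. -/

open MeasureTheory

theorem norm_sub_le_integral_norm_of_hasDerivWithinAt {E : Type*} [NormedAddCommGroup E]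
    [NormedSpace ℝ E] [CompleteSpace E] {f f' : ℝ → E} {a b : ℝ} (hab : a ≤ b)
    (hf : ∀ s ∈ Set.Icc a b, HasDerivWithinAt f (f' s) (Set.Icc a b) s)
    (hf' : ContinuousOn f' (Set.Icc a b)) :
    ‖f b - f a‖ ≤ ∫ s in a..b, ‖f' s‖ := by
  have hFTC : ∫ s in a..b, f' s = f b - f a :=
    intervalIntegral.integral_eq_sub_of_hasDeriv_right_of_le hab
      (fun s hs => (hf s hs).continuousWithinAt)
      (fun s hs => (hf s (Set.Ioo_subset_Icc_self hs)).mono_of_mem_nhdsWithin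
        (Icc_mem_nhdsGT_of_mem ⟨hs.1.le, hs.2⟩))
      (hf'.intervalIntegrable_of_Icc hab)
  rw [← hFTC]
  exact intervalIntegral.norm_integral_le_integral_norm hab

theorem Real.le_rpow_one_div_mul_of_mul_rpow_le_mul_rpow {a b c₁ c₂ p : ℝ} (ha : 0 ≤ a)
    (hb : 0 ≤ b) (hp : 0 < p) (hc₁ : 0 < c₁) (hc₂ : 0 ≤ c₂)
    (h : c₁ * a ^ p ≤ c₂ * b ^ p) :
    a ≤ (c₂ / c₁) ^ (1 / p) * b := by
  have hc : 0 ≤ c₂ / c₁ := div_nonneg hc₂ hc₁.le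
  have hpow : ((c₂ / c₁) ^ (1 / p) * b) ^ p = c₂ / c₁ * b ^ p := by
    rw [Real.mul_rpow (Real.rpow_nonneg hc _) hb, ← Real.rpow_mul hc, one_div_mul_cancel hp.ne',
      Real.rpow_one]
  rw [← Real.rpow_le_rpow_iff ha (by positivity) hp, hpow, div_mul_eq_mul_div,
    le_div_iff₀ hc₁, mul_comm]
  exact h

/-- Finsler–Lyapunov bound: if `S(t,s)` squeezes `c₁|∂ₛx|ᵖ ≤ S ≤ c₂|∂ₛx|ᵖ` along a `C¹`
family of curves and is nonincreasing in `t`, then the distance between the endpoint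
trajectories at any time `t ≥ 0` is bounded by `(c₂/c₁)^{1/p}` times the initial
length of the connecting family. -/
theorem stmt_12 {n : ℕ} (p c₁ c₂ : ℝ) (hp : 1 ≤ p) (hc₁ : 0 < c₁) (hc : c₁ ≤ c₂)
    (x : ℝ → ℝ → EuclideanSpace ℝ (Fin n)) (δx : ℝ → ℝ → EuclideanSpace ℝ (Fin n))
    (hderiv : ∀ t : ℝ, 0 ≤ t → ∀ s ∈ Set.Icc (0 : ℝ) 1,
      HasDerivWithinAt (x t) (δx t s) (Set.Icc 0 1) s)
    (hcont : ∀ t : ℝ, 0 ≤ t → ContinuousOn (δx t) (Set.Icc 0 1))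
    (S : ℝ → ℝ → ℝ)
    (hS₁ : ∀ t : ℝ, 0 ≤ t → ∀ s ∈ Set.Icc (0 : ℝ) 1,
      c₁ * ‖δx t s‖ ^ p ≤ S t s ∧ S t s ≤ c₂ * ‖δx t s‖ ^ p)
    (hS₂ : ∀ s ∈ Set.Icc (0 : ℝ) 1, AntitoneOn (fun t => S t s) (Set.Ici 0)) :
    ∀ t : ℝ, 0 ≤ t →
      ‖x t 1 - x t 0‖ ≤ ∫ s in (0 : ℝ)..1, ‖δx t s‖ ∧
        (∫ s in (0 : ℝ)..1, ‖δx t s‖) ≤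
          (c₂ / c₁) ^ (1 / p) * ∫ s in (0 : ℝ)..1, ‖δx 0 s‖ := by
  intro t ht
  refine ⟨norm_sub_le_integral_norm_of_hasDerivWithinAt zero_le_one (hderiv t ht) (hcont t ht), ?_⟩
  have hpointwise : ∀ s ∈ Set.Icc (0 : ℝ) 1, ‖δx t s‖ ≤ (c₂ / c₁) ^ (1 / p) * ‖δx 0 s‖ := by
    intro s hs
    have hS : S t s ≤ S 0 s := hS₂ s hs Set.self_mem_Ici ht ht
    exact Real.le_rpow_one_div_mul_of_mul_rpow_le_mul_rpow (norm_nonneg _) (norm_nonneg _)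
      (by linarith) hc₁ (by linarith)
      (((hS₁ t ht s hs).1.trans hS).trans (hS₁ 0 le_rfl s hs).2)
  have hint : ∀ u, 0 ≤ u → IntervalIntegrable (fun s => ‖δx u s‖) volume 0 1 :=
    fun u hu => (hcont u hu).norm.intervalIntegrable_of_Icc zero_le_one
  rw [← intervalIntegral.integral_const_mul]
  exact intervalIntegral.integral_mono_on zero_le_one (hint t ht)
    ((hint 0 le_rfl).const_mul _) hpointwise
end
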